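/- For every r ∈ (0,1), with q = √(1−r²), N = [[0,r,0],[−r,0,−q],[0,q,0]], and R_R(π) = exp(π·Ω_R), the following three matrix identities hold: (i) Ω_L·R_R(π) + R_R(π)·Ω_L = 2(2r²−1)·N; (ii) Ω_G·R_R(π) + R_R(π)·Ω_G = 2r·N; (iii) R_R(π)·Ω_R = N. Consequently, for real numbers a₁, a₂, the equation Ω_L·R_R(π) + R_R(π)·Ω_L = a₁·(Ω_G·R_R(π) + R_R(π)·Ω_G) + a₂·R_R(π)·Ω_R holds if and only if 2r·a₁ + a₂ = 2(2r²−1). -/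

import Mathlib

open Real

noncomputable def OmegaL (r : ℝ) : Matrix (Fin 3) (Fin 3) ℝ :=
  !![0, -r, 0; r, 0, -Real.sqrt (1 - r ^ 2); 0, Real.sqrt (1 - r ^ 2), 0]

noncomputable def OmegaR (r : ℝ) : Matrix (Fin 3) (Fin 3) ℝ :=
  !![0, -r, 0; r, 0, Real.sqrt (1 - r ^ 2); 0, -Real.sqrt (1 - r ^ 2), 0]

noncomputable def OmegaG : Matrix (Fin 3) (Fin 3) ℝ :=
  !![0, -1, 0; 1, 0, 0; 0, 0, 0]

/-- Rotation matrix of a left turn of radius `r` and arc angle `φ`. -/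
noncomputable def RL (r φ : ℝ) : Matrix (Fin 3) (Fin 3) ℝ := NormedSpace.exp (φ • OmegaL r)

/-- Rotation matrix of a right turn of radius `r` and arc angle `φ`. -/
noncomputable def RR (r φ : ℝ) : Matrix (Fin 3) (Fin 3) ℝ := NormedSpace.exp (φ • OmegaR r)

/-- Rotation matrix of a great-circle arc of angle `φ`. -/
noncomputable def RG (φ : ℝ) : Matrix (Fin 3) (Fin 3) ℝ := NormedSpace.exp (φ • OmegaG)


/-! Since `(r, q)` is a unit vector, `Ω_R ^ 3 = -Ω_R`, so Rodrigues' formula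
`exp (t • Ω) = 1 + sin t • Ω + (1 - cos t) • Ω ^ 2` gives the half-turn `R_R(π) = 1 + 2 • Ω_R ^ 2`.
Then `R_R(π) Ω_R = Ω_R + 2 Ω_R ^ 3 = -Ω_R`, and the matrix `N` of the statement is `-Ω_R`;
the two anticommutators are multiples of it by direct computation. As `N ≠ 0` (its entry `r`),
the final equation amounts to comparing the coefficients of `N`. -/

open Nat

section Rodrigues

variable {𝔸 : Type*} [Ring 𝔸] [Algebra ℝ 𝔸] {A : 𝔸}

theorem pow_two_mul_add_one_of_pow_three_eq_neg (h : A ^ 3 = -A) (k : ℕ) :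
    A ^ (2 * k + 1) = (-1 : ℝ) ^ k • A := by
  induction k with
  | zero => simp
  | succ k ih =>
    rw [show 2 * (k + 1) + 1 = 2 + (2 * k + 1) by ring, pow_add, ih, mul_smul_comm,
      ← pow_succ, h, pow_succ, mul_neg_one, neg_smul, smul_neg]

theorem pow_two_mul_add_two_of_pow_three_eq_neg (h : A ^ 3 = -A) (k : ℕ) :
    A ^ (2 * k + 2) = (-1 : ℝ) ^ k • A ^ 2 := by
  rw [pow_succ, pow_two_mul_add_one_of_pow_three_eq_neg h, smul_mul_assoc, ← pow_two]

variable [TopologicalSpace 𝔸] [IsTopologicalRing 𝔸] [ContinuousSMul ℝ 𝔸] [T2Space 𝔸]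

theorem exp_smul_of_pow_three_eq_neg (h : A ^ 3 = -A) (t : ℝ) :
    NormedSpace.exp (t • A) = 1 + Real.sin t • A + (1 - Real.cos t) • A ^ 2 := by
  rw [NormedSpace.exp_eq_tsum ℝ, add_right_comm]
  refine HasSum.tsum_eq (HasSum.even_add_odd ?_ ?_)
  · have hterm (k : ℕ) : ((2 * (k + 1))! : ℝ)⁻¹ • (t • A) ^ (2 * (k + 1)) =
        ((-1) ^ (k + 1) * t ^ (2 * (k + 1)) / (2 * (k + 1))!) • -A ^ 2 := by
      rw [smul_pow, smul_smul, show 2 * (k + 1) = 2 * k + 2 by ring,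
        pow_two_mul_add_two_of_pow_three_eq_neg h, smul_smul, smul_neg, ← neg_smul]
      congr 1
      field_simp
      ring
    -- the constant term `1` does not follow the pattern `A ^ (2k) = ± A ^ 2`, so split it off
    refine (hasSum_nat_add_iff' 1).mp ?_
    simp_rw [hterm]
    convert ((hasSum_nat_add_iff' 1).mpr (Real.hasSum_cos t)).smul_const (-A ^ 2) using 1
    · rfl
    · simp only [Finset.sum_range_one, mul_zero, pow_zero, factorial_zero, cast_one, inv_one,
        one_smul, div_one, one_mul]
      module
  · convert (Real.hasSum_sin t).smul_const A using 1
    ext k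
    rw [smul_pow, smul_smul, pow_two_mul_add_one_of_pow_three_eq_neg h, smul_smul]
    congr 1
    field_simp

end Rodrigues

section HalfTurn

variable {r : ℝ}

theorem OmegaR_pow_three (hr : r ^ 2 ≤ 1) : OmegaR r ^ 3 = -OmegaR r := by
  have hq := Real.sq_sqrt (sub_nonneg.2 hr)
  rw [OmegaR]
  generalize √(1 - r ^ 2) = q at hq
  ext i j
  fin_cases i <;> fin_cases j <;> simp [pow_succ] <;> grind

theorem RR_pi (hr : r ^ 2 ≤ 1) : RR r π = 1 + (2 : ℝ) • OmegaR r ^ 2 := by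
  rw [RR, exp_smul_of_pow_three_eq_neg (OmegaR_pow_three hr), sin_pi, cos_pi]
  norm_num

theorem RR_pi_mul_OmegaR (hr : r ^ 2 ≤ 1) : RR r π * OmegaR r = -OmegaR r := by
  rw [RR_pi hr, add_mul, one_mul, smul_mul_assoc, ← pow_succ, OmegaR_pow_three hr]
  module

theorem OmegaL_mul_RR_pi_add_RR_pi_mul_OmegaL (hr : r ^ 2 ≤ 1) :
    OmegaL r * RR r π + RR r π * OmegaL r = (2 * (2 * r ^ 2 - 1)) • -OmegaR r := by
  have hq := Real.sq_sqrt (sub_nonneg.2 hr)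
  rw [RR_pi hr, OmegaR, OmegaL]
  generalize √(1 - r ^ 2) = q at hq
  ext i j
  fin_cases i <;> fin_cases j <;> simp [pow_two, Matrix.one_fin_three] <;> grind

theorem OmegaG_mul_RR_pi_add_RR_pi_mul_OmegaG (hr : r ^ 2 ≤ 1) :
    OmegaG * RR r π + RR r π * OmegaG = (2 * r) • -OmegaR r := by
  have hq := Real.sq_sqrt (sub_nonneg.2 hr)
  rw [RR_pi hr, OmegaR, OmegaG]
  generalize √(1 - r ^ 2) = q at hq
  ext i j
  fin_cases i <;> fin_cases j <;> simp [pow_two, Matrix.one_fin_three] <;> grind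

theorem neg_OmegaR :
    -OmegaR r = !![0, r, 0; -r, 0, -Real.sqrt (1 - r ^ 2); 0, Real.sqrt (1 - r ^ 2), 0] := by
  simp [OmegaR, Matrix.neg_of]

end HalfTurn

theorem stmt_19 (r : ℝ) (hr : r ∈ Set.Ioo (0 : ℝ) 1) :
    (OmegaL r * RR r Real.pi + RR r Real.pi * OmegaL r =
      (2 * (2 * r ^ 2 - 1)) •
        !![0, r, 0; -r, 0, -Real.sqrt (1 - r ^ 2); 0, Real.sqrt (1 - r ^ 2), 0]) ∧
    (OmegaG * RR r Real.pi + RR r Real.pi * OmegaG =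
      (2 * r) •
        !![0, r, 0; -r, 0, -Real.sqrt (1 - r ^ 2); 0, Real.sqrt (1 - r ^ 2), 0]) ∧
    (RR r Real.pi * OmegaR r =
      !![0, r, 0; -r, 0, -Real.sqrt (1 - r ^ 2); 0, Real.sqrt (1 - r ^ 2), 0]) ∧
    ∀ a₁ a₂ : ℝ,
      (OmegaL r * RR r Real.pi + RR r Real.pi * OmegaL r =
        a₁ • (OmegaG * RR r Real.pi + RR r Real.pi * OmegaG) +
          a₂ • (RR r Real.pi * OmegaR r)) ↔
      2 * r * a₁ + a₂ = 2 * (2 * r ^ 2 - 1) := by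
  have hr2 : r ^ 2 ≤ 1 := pow_le_one₀ hr.1.le hr.2.le
  have hN : -OmegaR r ≠ 0 := fun h ↦ hr.1.ne' <| by
    simpa [OmegaR] using congrFun (congrFun h 1) 0
  rw [← neg_OmegaR, OmegaL_mul_RR_pi_add_RR_pi_mul_OmegaL hr2,
    OmegaG_mul_RR_pi_add_RR_pi_mul_OmegaG hr2, RR_pi_mul_OmegaR hr2]
  refine ⟨rfl, rfl, rfl, fun a₁ a₂ ↦ ?_⟩
  rw [smul_smul, ← add_smul, (smul_left_injective ℝ hN).eq_iff]
  constructor <;> intro h <;> linarith
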